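/- Let G be a finite p-group and let M, N be powerfully embedded subgroups of G. Then [M^{p^i}, N^{p^j}] = [M,N]^{p^{i+j}} for all natural numbers i, j. -/

import Mathlib

/-- For a subgroup `H` of `G`, the subgroup generated by `n`-th powers of elements of `H`. -/
def sgPow {G : Type*} [Group G] (H : Subgroup G) (n : ℕ) : Subgroup G :=
  Subgroup.closure {x | ∃ h ∈ H, h ^ n = x}

/-- A subgroup `N` of a finite p-group `G` is powerfully embedded if `[N,G] ≤ N^p`
for odd p, resp. `[N,G] ≤ N^4` for p = 2. -/
def PowerfullyEmbedded {G : Type*} [Group G] (p : ℕ) (N : Subgroup G) : Prop :=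
  ⁅N, (⊤ : Subgroup G)⁆ ≤ sgPow N (if p = 2 then 4 else p)

/-!
Every step is an instance of one descent principle for a finite `p`-group `G`: since
`H ≤ K ⊔ H^p ⊔ [H,G]` forces `H ≤ K` for normal `H`, `K`, one may prove `H ≤ K` in a quotient
where `K` is trivial and `H` is central of exponent `p`. There the class-two identities
`(ab)^n = a^n b^n [b,a]^(n choose 2)` and `[x^n, g] = [x,g]^n [[x,g],x⁻¹]^(n choose 2)` apply,
and `p ∣ n choose 2` for `n = p` odd, resp. `n = 4`. For powerfully embedded `M`, `N` this shows
that `[M,N]` and `M^p` are powerfully embedded, that `[M^p, N] = [M,N]^p` and that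
`(M^(p^i))^p = M^(p^(i+1))`; the theorem follows by induction on `i` and `j`.
-/

universe u

open Subgroup
open scoped commutatorElement

section sgPow

variable {G : Type*} [Group G]

theorem sgPow_le_iff {H K : Subgroup G} {n : ℕ} : sgPow H n ≤ K ↔ ∀ a ∈ H, a ^ n ∈ K := by
  rw [sgPow, closure_le]
  exact ⟨fun h a ha => h ⟨a, ha, rfl⟩, by rintro h _ ⟨a, ha, rfl⟩; exact h a ha⟩

theorem pow_mem_sgPow {H : Subgroup G} {a : G} (ha : a ∈ H) (n : ℕ) : a ^ n ∈ sgPow H n :=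
  subset_closure ⟨a, ha, rfl⟩

theorem sgPow_le_self (H : Subgroup G) (n : ℕ) : sgPow H n ≤ H :=
  sgPow_le_iff.2 fun _ ha => H.pow_mem ha n

theorem sgPow_mono {H K : Subgroup G} (h : H ≤ K) (n : ℕ) : sgPow H n ≤ sgPow K n :=
  sgPow_le_iff.2 fun _ ha => pow_mem_sgPow (h ha) n

theorem sgPow_one (H : Subgroup G) : sgPow H 1 = H :=
  le_antisymm (sgPow_le_self H 1) fun a ha => by simpa using pow_mem_sgPow ha 1

theorem sgPow_eq_bot_iff {H : Subgroup G} {n : ℕ} : sgPow H n = ⊥ ↔ ∀ a ∈ H, a ^ n = 1 := by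
  simp only [eq_bot_iff, sgPow_le_iff, mem_bot]

theorem sgPow_bot (n : ℕ) : sgPow (⊥ : Subgroup G) n = ⊥ :=
  le_bot_iff.1 (sgPow_le_self ⊥ n)

theorem sgPow_le_sgPow_of_dvd (H : Subgroup G) {m n : ℕ} (h : m ∣ n) : sgPow H n ≤ sgPow H m := by
  obtain ⟨k, rfl⟩ := h
  exact sgPow_le_iff.2 fun a ha => by rw [pow_mul]; exact pow_mem (pow_mem_sgPow ha m) k

theorem sgPow_eq_bot_of_dvd {H : Subgroup G} {m n : ℕ} (h : m ∣ n) (hm : sgPow H m = ⊥) :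
    sgPow H n = ⊥ :=
  le_bot_iff.1 (hm ▸ sgPow_le_sgPow_of_dvd H h)

theorem sgPow_mul_le_sgPow_sgPow (H : Subgroup G) (m n : ℕ) :
    sgPow H (m * n) ≤ sgPow (sgPow H m) n :=
  sgPow_le_iff.2 fun a ha => by rw [pow_mul]; exact pow_mem_sgPow (pow_mem_sgPow ha m) n

theorem map_sgPow {G' : Type*} [Group G'] (f : G →* G') (H : Subgroup G) (n : ℕ) :
    (sgPow H n).map f = sgPow (H.map f) n := by
  rw [sgPow, sgPow, MonoidHom.map_closure]
  congr 1
  ext x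
  simp

instance sgPow_normal (H : Subgroup G) [H.Normal] (n : ℕ) : (sgPow H n).Normal :=
  normal_iff_map_conj_eq.2 fun g => by rw [map_sgPow, Normal.map_conj_eq]

end sgPow

section Commutators

variable {G : Type*} [Group G]

theorem mul_pow_of_commutatorElement_mem_center {a b : G} (h : ⁅b, a⁆ ∈ center G) (n : ℕ) :
    (a * b) ^ n = a ^ n * b ^ n * ⁅b, a⁆ ^ n.choose 2 := by
  set e := ⁅b, a⁆ with he_def
  have he : ∀ g k, g * e ^ k = e ^ k * g := fun g k => mem_center_iff.1 (pow_mem h k) g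
  have hba : b * a = a * b * e := by
    rw [← pow_one e, he, pow_one, he_def, commutatorElement_def]; group
  have hpow : ∀ k : ℕ, b ^ k * a = a * b ^ k * e ^ k := by
    intro k
    induction k with
    | zero => simp
    | succ k ih =>
      calc b ^ (k + 1) * a = b ^ k * a * b * e := by rw [pow_succ, mul_assoc, hba]; group
        _ = a * b ^ k * (e ^ k * b) * e := by rw [ih]; group
        _ = a * b ^ (k + 1) * e ^ (k + 1) := by rw [← he]; group
  induction n with
  | zero => simp
  | succ n ih =>
    calc (a * b) ^ (n + 1) = a ^ n * b ^ n * (e ^ n.choose 2 * a) * b := by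
          rw [pow_succ, ih]; group
      _ = a ^ n * (b ^ n * a) * (e ^ n.choose 2 * b) := by rw [← he]; group
      _ = a ^ (n + 1) * b ^ n * (e ^ n * b) * e ^ n.choose 2 := by rw [hpow, ← he]; group
      _ = a ^ (n + 1) * b ^ (n + 1) * e ^ (n + 1).choose 2 := by
          rw [← he, Nat.choose_succ_succ, Nat.choose_one_right]; group

theorem commutatorElement_pow_left {x g : G} (h : ⁅⁅x, g⁆, x⁻¹⁆ ∈ center G) (n : ℕ) :
    ⁅x ^ n, g⁆ = ⁅x, g⁆ ^ n * ⁅⁅x, g⁆, x⁻¹⁆ ^ n.choose 2 := by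
  have hconj : x⁻¹ * ⁅x, g⁆ = g * x⁻¹ * g⁻¹ := by rw [commutatorElement_def]; group
  have hsplit : ⁅x ^ n, g⁆ = x ^ n * (x⁻¹ * ⁅x, g⁆) ^ n := by
    rw [hconj, conj_pow, commutatorElement_def]; group
  rw [hsplit, mul_pow_of_commutatorElement_mem_center h, ← mul_assoc, ← mul_assoc, inv_pow,
    mul_inv_cancel, one_mul]

end Commutators

section CommutatorSubgroups

variable {G : Type*} [Group G]

theorem commutator_sgPow_eq_bot {X Y Z : Subgroup G} {n : ℕ} (hXY : ⁅X, Y⁆ ≤ Z)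
    (hZ : sgPow Z n = ⊥) (hc : ⁅Z, (⊤ : Subgroup G)⁆ ≤ center G)
    (he : sgPow ⁅Z, (⊤ : Subgroup G)⁆ (n.choose 2) = ⊥) :
    ⁅sgPow X n, Y⁆ = ⊥ := by
  rw [commutator_eq_bot_iff_le_centralizer, sgPow_le_iff]
  intro x hx
  rw [mem_centralizer_iff]
  intro y hy
  have hxy : ⁅x, y⁆ ∈ Z := hXY (commutator_mem_commutator hx hy)
  have hw : ⁅⁅x, y⁆, x⁻¹⁆ ∈ ⁅Z, (⊤ : Subgroup G)⁆ := commutator_mem_commutator hxy (mem_top _)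
  have h := commutatorElement_pow_left (hc hw) n
  rw [sgPow_eq_bot_iff.1 hZ _ hxy, sgPow_eq_bot_iff.1 he _ hw, mul_one] at h
  exact (commutatorElement_eq_one_iff_commute.1 h).eq.symm

theorem commutator_sgPow_eq_bot_of_le_center {X Y Z : Subgroup G} {n : ℕ} (hXY : ⁅X, Y⁆ ≤ Z)
    (hZ : sgPow Z n = ⊥) (hc : Z ≤ center G) : ⁅sgPow X n, Y⁆ = ⊥ := by
  have hZc : ⁅Z, (⊤ : Subgroup G)⁆ = ⊥ := commutator_top_right_eq_bot_iff_le_center.2 hc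
  exact commutator_sgPow_eq_bot hXY hZ (by rw [hZc]; exact bot_le) (by rw [hZc, sgPow_bot])

theorem sgPow_eq_bot_of_closure_eq {S : Set G} {X : Subgroup G} {n : ℕ} (hSX : closure S = X)
    (hS : ∀ s ∈ S, s ^ n = 1) (hc : ⁅X, (⊤ : Subgroup G)⁆ ≤ center G)
    (he : sgPow ⁅X, (⊤ : Subgroup G)⁆ (n.choose 2) = ⊥) : sgPow X n = ⊥ := by
  rw [sgPow_eq_bot_iff]
  intro x hx
  rw [← hSX] at hx
  induction hx using closure_induction with
  | mem s hs => exact hS s hs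
  | one => exact one_pow n
  | mul a b _ hb iha ihb =>
    have hw : ⁅b, a⁆ ∈ ⁅X, (⊤ : Subgroup G)⁆ := commutator_mem_commutator (hSX ▸ hb) (mem_top a)
    rw [mul_pow_of_commutatorElement_mem_center (hc hw), iha, ihb, sgPow_eq_bot_iff.1 he _ hw,
      one_mul, one_mul]
  | inv a _ iha => rw [inv_pow, iha, inv_one]

theorem map_le_center_of_commutator_le_ker {G' : Type*} [Group G'] {f : G →* G'}
    (hf : Function.Surjective f) {H : Subgroup G} (h : ⁅H, (⊤ : Subgroup G)⁆ ≤ f.ker) :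
    H.map f ≤ center G' := by
  rw [← commutator_top_right_eq_bot_iff_le_center, ← map_top_of_surjective f hf,
    ← map_commutator, Subgroup.map_eq_bot_iff]
  exact h

end CommutatorSubgroups

section Descent

variable {G : Type u} [Group G]

theorem QuotientGroup.map_mk'_eq_bot_iff {N H : Subgroup G} [N.Normal] :
    H.map (QuotientGroup.mk' N) = ⊥ ↔ H ≤ N := by
  rw [Subgroup.map_eq_bot_iff, QuotientGroup.ker_mk']

theorem map_sup_of_le_ker {G' : Type*} [Group G'] {f : G →* G'} {A : Subgroup G}
    (hA : A ≤ f.ker) (B : Subgroup G) : (A ⊔ B).map f = B.map f := by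
  rw [Subgroup.map_sup, (Subgroup.map_eq_bot_iff A).2 hA, bot_sup_eq]

theorem eq_bot_of_le_commutator_top [Group.IsNilpotent G] {H : Subgroup G}
    (h : H ≤ ⁅H, (⊤ : Subgroup G)⁆) : H = ⊥ := by
  obtain ⟨n, hn⟩ := Subgroup.nilpotent_iff_lowerCentralSeries.1 ‹_›
  have hle : ∀ k, H ≤ (⊤ : Subgroup G).lowerCentralSeries k := by
    intro k
    induction k with
    | zero => exact le_top
    | succ k ih => exact h.trans (commutator_mono ih le_rfl)
  exact le_bot_iff.1 (hn ▸ hle n)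

variable [Finite G] {p : ℕ}

theorem eq_bot_of_le_center_of_le_sgPow (hp : p.Prime) (hG : IsPGroup p G) {Z : Subgroup G}
    (hZ : Z ≤ center G) (h : Z ≤ sgPow Z p) : Z = ⊥ := by
  have hpow : ∀ x ∈ sgPow Z p, ∃ z ∈ Z, z ^ p = x := by
    intro x hx
    induction hx using closure_induction with
    | mem x hx => exact hx
    | one => exact ⟨1, one_mem Z, one_pow p⟩
    | mul x y _ _ hx hy =>
      obtain ⟨a, ha, rfl⟩ := hx
      obtain ⟨b, hb, rfl⟩ := hy
      exact ⟨a * b, mul_mem ha hb, Commute.mul_pow (mem_center_iff.1 (hZ hb) a) p⟩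
    | inv x _ hx =>
      obtain ⟨a, ha, rfl⟩ := hx
      exact ⟨a⁻¹, inv_mem ha, inv_pow a p⟩
  have hsurj : Function.Surjective fun z : Z => z ^ p := by
    intro z
    obtain ⟨a, ha, hz⟩ := hpow z (h z.2)
    exact ⟨⟨a, ha⟩, Subtype.ext (by simpa using hz)⟩
  by_contra hne
  have : Nontrivial Z := (nontrivial_iff_ne_bot Z).2 hne
  have := Fact.mk hp
  obtain ⟨k, hk, hcard⟩ := (hG.to_subgroup Z).nontrivial_iff_card.1 ‹_›
  obtain ⟨z, hz⟩ := exists_prime_orderOf_dvd_card' p (hcard ▸ dvd_pow_self p hk.ne')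
  have hz1 : z = 1 := Finite.injective_iff_surjective.2 hsurj (by simp [← hz, pow_orderOf_eq_one])
  exact hp.one_lt.ne' (by rw [← hz, hz1, orderOf_one])

theorem le_of_le_sup_sgPow_sup_commutator (hp : p.Prime) (hG : IsPGroup p G)
    {H K : Subgroup G} [H.Normal] [K.Normal]
    (h : H ≤ K ⊔ sgPow H p ⊔ ⁅H, (⊤ : Subgroup G)⁆) : H ≤ K := by
  have := Fact.mk hp
  have hL : H ≤ K ⊔ ⁅H, (⊤ : Subgroup G)⁆ := by
    set L := K ⊔ ⁅H, (⊤ : Subgroup G)⁆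
    have hf := QuotientGroup.mk'_surjective L
    have hker : L ≤ (QuotientGroup.mk' L).ker := (QuotientGroup.ker_mk' L).ge
    have hle : H.map (QuotientGroup.mk' L) ≤ sgPow (H.map (QuotientGroup.mk' L)) p := by
      rw [← map_sgPow, ← map_sup_of_le_ker hker (sgPow H p)]
      exact map_mono (h.trans (sup_le (sup_le (le_sup_of_le_left le_sup_left) le_sup_right)
        (le_sup_of_le_left le_sup_right)))
    have hc := map_le_center_of_commutator_le_ker hf (hker.trans' le_sup_right)
    exact QuotientGroup.map_mk'_eq_bot_iff.1
      (eq_bot_of_le_center_of_le_sgPow hp (hG.to_quotient L) hc hle)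
  have hf := QuotientGroup.mk'_surjective K
  have : Group.IsNilpotent (G ⧸ K) := (hG.to_quotient K).isNilpotent
  refine QuotientGroup.map_mk'_eq_bot_iff.1 (eq_bot_of_le_commutator_top ?_)
  rw [← map_top_of_surjective _ hf, ← map_commutator,
    ← map_sup_of_le_ker (QuotientGroup.ker_mk' K).ge ⁅H, ⊤⁆]
  exact map_mono hL

theorem le_of_forall_map_eq_bot (hp : p.Prime) (hG : IsPGroup p G) {H K : Subgroup G}
    [H.Normal] [K.Normal]
    (h : ∀ (Q : Type u) [Group Q] (f : G →* Q), Function.Surjective f → K.map f = ⊥ →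
      H.map f ≤ center Q → sgPow (H.map f) p = ⊥ → H.map f = ⊥) : H ≤ K := by
  apply le_of_le_sup_sgPow_sup_commutator hp hG
  set T := K ⊔ sgPow H p ⊔ ⁅H, (⊤ : Subgroup G)⁆
  have hf := QuotientGroup.mk'_surjective T
  refine QuotientGroup.map_mk'_eq_bot_iff.1 (h (G ⧸ T) (QuotientGroup.mk' T) hf ?_ ?_ ?_)
  · exact QuotientGroup.map_mk'_eq_bot_iff.2 (le_sup_left.trans le_sup_left)
  · exact map_le_center_of_commutator_le_ker hf ((QuotientGroup.ker_mk' T).ge.trans' le_sup_right)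
  · rw [← map_sgPow]
    exact QuotientGroup.map_mk'_eq_bot_iff.2 (le_sup_right.trans le_sup_left)

end Descent

theorem Nat.Prime.dvd_choose_two {p : ℕ} (hp : p.Prime) (h2 : p ≠ 2) : p ∣ p.choose 2 :=
  hp.dvd_choose_self two_ne_zero (lt_of_le_of_ne hp.two_le (Ne.symm h2))

namespace PowerfullyEmbedded

variable {G : Type u} [Group G] {p : ℕ} {N : Subgroup G}

theorem normal (h : PowerfullyEmbedded p N) : N.Normal := by
  refine ⟨fun n hn g => ?_⟩
  have hgn : ⁅g, n⁆ ∈ N :=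
    sgPow_le_self N _ (h (commutator_comm N ⊤ ▸ commutator_mem_commutator (mem_top g) hn))
  have hconj : g * n * g⁻¹ = ⁅g, n⁆ * n := by rw [commutatorElement_def]; group
  exact hconj ▸ mul_mem hgn hn

theorem map {G' : Type*} [Group G'] {f : G →* G'} (hf : Function.Surjective f)
    (h : PowerfullyEmbedded p N) : PowerfullyEmbedded p (N.map f) := by
  unfold PowerfullyEmbedded at *
  rw [← map_top_of_surjective f hf, ← map_commutator, ← map_sgPow]
  exact map_mono h

theorem commutator_top_le_sgPow (h : PowerfullyEmbedded p N) :
    ⁅N, (⊤ : Subgroup G)⁆ ≤ sgPow N p := by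
  refine h.trans (sgPow_le_sgPow_of_dvd N ?_)
  split_ifs with h2
  · subst h2; norm_num
  · exact dvd_rfl

theorem commutator_top_le_center (hp : p.Prime) (h : PowerfullyEmbedded p N)
    (hc : sgPow N p ≤ center G) (he : sgPow (sgPow N p) p = ⊥) :
    ⁅N, (⊤ : Subgroup G)⁆ ≤ center G ∧ sgPow ⁅N, (⊤ : Subgroup G)⁆ (p.choose 2) = ⊥ := by
  unfold PowerfullyEmbedded at h
  split_ifs at h with h2
  · subst h2
    have hN : ⁅N, (⊤ : Subgroup G)⁆ = ⊥ :=
      le_bot_iff.1 (h.trans ((sgPow_mul_le_sgPow_sgPow N 2 2).trans he.le))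
    rw [hN]
    exact ⟨bot_le, sgPow_bot _⟩
  · exact ⟨h.trans hc, sgPow_eq_bot_of_dvd (hp.dvd_choose_two h2)
      (le_bot_iff.1 ((sgPow_mono h p).trans he.le))⟩

end PowerfullyEmbedded

section FinitePGroup

variable {G : Type u} [Group G] [Finite G] {p : ℕ}

theorem powerfullyEmbedded_commutator (hp : p.Prime) (hG : IsPGroup p G) {M N : Subgroup G}
    (hM : PowerfullyEmbedded p M) (hN : PowerfullyEmbedded p N) :
    PowerfullyEmbedded p ⁅M, N⁆ := by
  have := hM.normal
  have := hN.normal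
  set q := if p = 2 then 4 else p with hq
  have hdvd : p ∣ q.choose 2 := by
    split_ifs at hq with h2
    · subst h2; rw [hq]; decide
    · rw [hq]; exact hp.dvd_choose_two h2
  -- the first two terms are what the three subgroup lemma needs to kill the third
  suffices h : ⁅sgPow M q, N⁆ ⊔ ⁅sgPow N q, M⁆ ⊔ ⁅⁅M, N⁆, (⊤ : Subgroup G)⁆ ≤ sgPow ⁅M, N⁆ q from
    le_sup_right.trans h
  apply le_of_forall_map_eq_bot hp hG
  intro Q _ f hf hK hc he
  simp only [Subgroup.map_sup, map_commutator, map_sgPow, map_top_of_surjective f hf] at hK hc he ⊢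
  have hc' := le_sup_right.trans hc
  have he' : sgPow ⁅⁅M.map f, N.map f⁆, ⊤⁆ (q.choose 2) = ⊥ :=
    sgPow_eq_bot_of_dvd hdvd (le_bot_iff.1 ((sgPow_mono le_sup_right p).trans he.le))
  have hMN : ⁅sgPow (M.map f) q, N.map f⁆ = ⊥ := commutator_sgPow_eq_bot le_rfl hK hc' he'
  have hNM : ⁅sgPow (N.map f) q, M.map f⁆ = ⊥ :=
    commutator_sgPow_eq_bot (commutator_comm _ _).le hK hc' he'
  have h3 : ⁅⁅M.map f, N.map f⁆, ⊤⁆ = ⊥ := commutator_commutator_eq_bot_of_rotate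
    (le_bot_iff.1 ((commutator_mono (hN.map hf) le_rfl).trans hNM.le))
    (le_bot_iff.1 ((commutator_mono ((commutator_comm _ _).le.trans (hM.map hf)) le_rfl).trans
      hMN.le))
  rw [hMN, hNM, h3, sup_bot_eq, sup_bot_eq]

theorem powerfullyEmbedded_sgPow (hp : p.Prime) (hG : IsPGroup p G) {N : Subgroup G}
    (hN : PowerfullyEmbedded p N) : PowerfullyEmbedded p (sgPow N p) := by
  have := hN.normal
  apply le_of_forall_map_eq_bot hp hG
  intro Q _ f hf hK hc he
  simp only [map_commutator, map_sgPow, map_top_of_surjective f hf] at hK hc he ⊢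
  have hN' := hN.map hf
  unfold PowerfullyEmbedded at hN'
  split_ifs at hK hN' with h2
  · subst h2
    -- `Z` contains `[N, G] ≤ N^4` and turns out to be central of exponent 2
    set Z := sgPow (sgPow (N.map f) 2) 2
    have hZ : ⁅Z, (⊤ : Subgroup Q)⁆ = ⊥ := commutator_sgPow_eq_bot_of_le_center le_rfl he hc
    have hexp : sgPow Z 2 = ⊥ := by
      refine sgPow_eq_bot_of_closure_eq rfl ?_ (hZ.le.trans bot_le) (by rw [hZ, sgPow_bot])
      rintro _ ⟨u, hu, rfl⟩
      rw [← pow_mul]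
      exact sgPow_eq_bot_iff.1 hK u hu
    exact commutator_sgPow_eq_bot_of_le_center (hN'.trans (sgPow_mul_le_sgPow_sgPow _ 2 2)) hexp
      (commutator_top_right_eq_bot_iff_le_center.1 hZ)
  · exact commutator_sgPow_eq_bot hN' hK hc (sgPow_eq_bot_of_dvd (hp.dvd_choose_two h2) he)

theorem commutator_sgPow_left (hp : p.Prime) (hG : IsPGroup p G) {M N : Subgroup G}
    (hM : PowerfullyEmbedded p M) (hN : PowerfullyEmbedded p N) :
    ⁅sgPow M p, N⁆ = sgPow ⁅M, N⁆ p := by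
  have := hM.normal
  have := hN.normal
  have hMN : ∀ {Q : Type u} [Group Q] (f : G →* Q), Function.Surjective f →
      PowerfullyEmbedded p ⁅M.map f, N.map f⁆ := fun f hf =>
    map_commutator M N f ▸ (powerfullyEmbedded_commutator hp hG hM hN).map hf
  apply le_antisymm
  · apply le_of_forall_map_eq_bot hp hG
    intro Q _ f hf hK _ _
    rw [map_sgPow, map_commutator] at hK
    rw [map_commutator, map_sgPow]
    refine commutator_sgPow_eq_bot_of_le_center le_rfl hK ?_
    exact commutator_top_right_eq_bot_iff_le_center.1
      (le_bot_iff.1 (hK ▸ (hMN f hf).commutator_top_le_sgPow))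
  · apply le_of_forall_map_eq_bot hp hG
    intro Q _ f hf hK hc he
    rw [map_commutator, map_sgPow] at hK
    rw [map_sgPow, map_commutator] at hc he ⊢
    obtain ⟨hc', he'⟩ := (hMN f hf).commutator_top_le_center hp hc he
    refine sgPow_eq_bot_of_closure_eq (commutator_def _ _).symm ?_ hc' he'
    rintro _ ⟨m, hm, n, hn, rfl⟩
    have hw : ⁅⁅m, n⁆, m⁻¹⁆ ∈ ⁅⁅M.map f, N.map f⁆, (⊤ : Subgroup Q)⁆ :=
      commutator_mem_commutator (commutator_mem_commutator hm hn) (mem_top _)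
    have h := commutatorElement_pow_left (hc' hw) p
    have hmn : ⁅m ^ p, n⁆ = 1 := by
      simpa [hK] using commutator_mem_commutator (pow_mem_sgPow hm p) hn
    rw [hmn, sgPow_eq_bot_iff.1 he' _ hw, mul_one] at h
    exact h.symm

theorem sgPow_sgPow_of_powerfullyEmbedded (hp : p.Prime) (hG : IsPGroup p G)
    {W : Subgroup G} [W.Normal] {n : ℕ} (hW : PowerfullyEmbedded p (sgPow W n)) :
    sgPow (sgPow W n) p = sgPow W (n * p) := by
  refine le_antisymm ?_ (sgPow_mul_le_sgPow_sgPow W n p)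
  apply le_of_forall_map_eq_bot hp hG
  intro Q _ f hf hK hc he
  simp only [map_sgPow] at hK hc he ⊢
  obtain ⟨hc', he'⟩ := (map_sgPow f W n ▸ hW.map hf).commutator_top_le_center hp hc he
  refine sgPow_eq_bot_of_closure_eq rfl ?_ hc' he'
  rintro _ ⟨w, hw, rfl⟩
  rw [← pow_mul]
  exact sgPow_eq_bot_iff.1 hK w hw

theorem powerfullyEmbedded_sgPow_pow (hp : p.Prime) (hG : IsPGroup p G) {M : Subgroup G}
    (hM : PowerfullyEmbedded p M) (i : ℕ) : PowerfullyEmbedded p (sgPow M (p ^ i)) := by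
  have := hM.normal
  induction i with
  | zero => rwa [pow_zero, sgPow_one]
  | succ i ih =>
    rw [pow_succ, ← sgPow_sgPow_of_powerfullyEmbedded hp hG ih]
    exact powerfullyEmbedded_sgPow hp hG ih

theorem sgPow_sgPow_pow_pow (hp : p.Prime) (hG : IsPGroup p G) {M : Subgroup G}
    (hM : PowerfullyEmbedded p M) (i j : ℕ) :
    sgPow (sgPow M (p ^ i)) (p ^ j) = sgPow M (p ^ (i + j)) := by
  have := hM.normal
  have hMi := powerfullyEmbedded_sgPow_pow hp hG hM i
  induction j with
  | zero => rw [pow_zero, sgPow_one, add_zero]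
  | succ j ih =>
    have hj := sgPow_sgPow_of_powerfullyEmbedded hp hG (powerfullyEmbedded_sgPow_pow hp hG hMi j)
    have hij :=
      sgPow_sgPow_of_powerfullyEmbedded hp hG (powerfullyEmbedded_sgPow_pow hp hG hM (i + j))
    rw [pow_succ, ← hj, ih, hij, ← pow_succ, add_assoc]

theorem commutator_sgPow_pow_left (hp : p.Prime) (hG : IsPGroup p G) {M N : Subgroup G}
    (hM : PowerfullyEmbedded p M) (hN : PowerfullyEmbedded p N) (i : ℕ) :
    ⁅sgPow M (p ^ i), N⁆ = sgPow ⁅M, N⁆ (p ^ i) := by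
  induction i with
  | zero => simp only [pow_zero, sgPow_one]
  | succ i ih =>
    have hM1 := sgPow_sgPow_pow_pow hp hG hM i 1
    have hMN1 := sgPow_sgPow_pow_pow hp hG (powerfullyEmbedded_commutator hp hG hM hN) i 1
    rw [pow_one] at hM1 hMN1
    rw [← hM1, commutator_sgPow_left hp hG (powerfullyEmbedded_sgPow_pow hp hG hM i) hN, ih, hMN1]

end FinitePGroup

/-- Shalev: if M, N are powerfully embedded subgroups of a finite p-group G,
then [M^{p^i}, N^{p^j}] = [M,N]^{p^{i+j}} for all i, j. -/
theorem stmt6 {G : Type*} [Group G] [Finite G] (p : ℕ) (hp : p.Prime)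
    (hpG : IsPGroup p G)
    (M N : Subgroup G) (hM : PowerfullyEmbedded p M) (hN : PowerfullyEmbedded p N)
    (i j : ℕ) :
    ⁅sgPow M (p ^ i), sgPow N (p ^ j)⁆ = sgPow ⁅M, N⁆ (p ^ (i + j)) := by
  calc ⁅sgPow M (p ^ i), sgPow N (p ^ j)⁆
      = sgPow ⁅N, sgPow M (p ^ i)⁆ (p ^ j) := by
        rw [commutator_comm,
          commutator_sgPow_pow_left hp hpG hN (powerfullyEmbedded_sgPow_pow hp hpG hM i)]
    _ = sgPow (sgPow ⁅M, N⁆ (p ^ i)) (p ^ j) := by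
        rw [commutator_comm, commutator_sgPow_pow_left hp hpG hM hN]
    _ = sgPow ⁅M, N⁆ (p ^ (i + j)) :=
        sgPow_sgPow_pow_pow hp hpG (powerfullyEmbedded_commutator hp hpG hM hN) i j
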